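/- arXiv:2605.00069 — 4 statements merged into one kernel-verified Lean document; each statement's English description precedes it below -/
import Mathlib

section
/- Let k ≥ 1, let f : Fin k → ℝ → ℝ, and let L : Fin k → ℝ be such that for every i, f_i(γ) → L_i as γ → 0⁺. Then softmin_γ(f_1(γ), …, f_k(γ)) → min_i L_i as γ → 0⁺ (limits taken along the filter of positive reals tending to 0). -/
/-- The soft minimum: softmin_γ(a) = −γ · log(∑ i, exp(−a i / γ)). -/
noncomputable def softmin {k : ℕ} (γ : ℝ) (a : Fin k → ℝ) : ℝ :=
  -γ * Real.log (∑ i, Real.exp (-a i / γ))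

/-!
For `γ > 0` the sum `∑ i, exp (-a i / γ)` lies between its largest term `exp (-min a / γ)`
and `k` times that term, so `min a - γ log k ≤ softmin γ a ≤ min a`. As `γ → 0⁺` both bounds
tend to the limit of the minimum of the entries, and the soft minimum is squeezed between them.
-/

open Filter Topology Real

section Bounds

variable {k : ℕ} {γ : ℝ}

theorem softmin_le_apply (hγ : 0 < γ) (a : Fin k → ℝ) (i : Fin k) : softmin γ a ≤ a i := by
  have hsum : 0 < ∑ j, exp (-a j / γ) :=
    Finset.sum_pos (fun j _ => exp_pos _) ⟨i, Finset.mem_univ i⟩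
  have hterm : -a i / γ ≤ log (∑ j, exp (-a j / γ)) :=
    (le_log_iff_exp_le hsum).2 <|
      Finset.single_le_sum (f := fun j => exp (-a j / γ)) (fun j _ => (exp_pos _).le)
        (Finset.mem_univ i)
  rw [div_le_iff₀ hγ] at hterm
  unfold softmin
  linarith

theorem softmin_le_inf' (hγ : 0 < γ) (a : Fin k → ℝ)
    (h : (Finset.univ : Finset (Fin k)).Nonempty) :
    softmin γ a ≤ Finset.univ.inf' h a :=
  Finset.le_inf' h a fun i _ => softmin_le_apply hγ a i

theorem sub_mul_log_card_le_softmin (hk : k ≠ 0) (hγ : 0 < γ) {a : Fin k → ℝ} {m : ℝ}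
    (hm : ∀ i, m ≤ a i) : m - γ * log k ≤ softmin γ a := by
  have hk' : (0 : ℝ) < k := by exact_mod_cast Nat.pos_of_ne_zero hk
  have hsum_pos : 0 < ∑ j, exp (-a j / γ) :=
    Finset.sum_pos (fun j _ => exp_pos _) ⟨⟨0, Nat.pos_of_ne_zero hk⟩, Finset.mem_univ _⟩
  have hsum_le : ∑ j, exp (-a j / γ) ≤ exp (log k + -m / γ) := by
    rw [exp_add, exp_log hk']
    calc ∑ j, exp (-a j / γ) ≤ ∑ _j : Fin k, exp (-m / γ) :=
          Finset.sum_le_sum fun j _ => exp_le_exp.2 <| by gcongr; exact hm j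
      _ = k * exp (-m / γ) := by simp
  have hlog := mul_le_mul_of_nonneg_left ((log_le_iff_le_exp hsum_pos).2 hsum_le) hγ.le
  rw [mul_add, mul_div_cancel₀ _ hγ.ne'] at hlog
  unfold softmin
  linarith

theorem inf'_sub_mul_log_card_le_softmin (hγ : 0 < γ) (a : Fin k → ℝ)
    (h : (Finset.univ : Finset (Fin k)).Nonempty) :
    Finset.univ.inf' h a - γ * log k ≤ softmin γ a :=
  sub_mul_log_card_le_softmin (by simpa using h.card_pos.ne') hγ
    fun i => Finset.inf'_le a (Finset.mem_univ i)

end Bounds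

/-- If each entry f_i(γ) → L_i as γ → 0⁺, then softmin_γ(f(γ)) → min_i L_i as γ → 0⁺. -/
theorem softmin_tendsto_min_of_tendsto {k : ℕ} (hk : 1 ≤ k)
    (f : Fin k → ℝ → ℝ) (L : Fin k → ℝ)
    (hf : ∀ i, Filter.Tendsto (f i) (nhdsWithin 0 (Set.Ioi 0)) (nhds (L i))) :
    Filter.Tendsto (fun γ : ℝ => softmin γ (fun i => f i γ)) (nhdsWithin 0 (Set.Ioi 0))
      (nhds (Finset.univ.inf' ⟨⟨0, hk⟩, Finset.mem_univ _⟩ L)) := by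
  set h : (Finset.univ : Finset (Fin k)).Nonempty := ⟨⟨0, hk⟩, Finset.mem_univ _⟩
  have hmin : Tendsto (fun γ => Finset.univ.inf' h fun i => f i γ) (𝓝[>] 0)
      (𝓝 (Finset.univ.inf' h L)) :=
    Tendsto.finset_inf'_nhds_apply h fun i _ => hf i
  have hgap : Tendsto (fun γ : ℝ => γ * log k) (𝓝[>] 0) (𝓝 0) := by
    simpa using (tendsto_id.mul_const (log k)).mono_left (nhdsWithin_le_nhds (a := (0 : ℝ)))
  refine tendsto_of_tendsto_of_tendsto_of_le_of_le' (by simpa using hmin.sub hgap) hmin ?_ ?_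
  · filter_upwards [self_mem_nhdsWithin] with γ hγ
    exact inf'_sub_mul_log_card_le_softmin hγ _ h
  · filter_upwards [self_mem_nhdsWithin] with γ hγ
    exact softmin_le_inf' hγ _ h
end

section
/- Let γ > 0, ε > 0, and c ∈ ℝ. Set t := trans_{γ,ε}(0, 0, 0; c). Then the Soft-MSM value of the pair of identical length-two series x = y = (0, 0), namely F := softmin_γ(0, 2t, 2t) (the final cost-matrix entry C_{2,2} of the Soft-MSM forward recursion), satisfies F = −γ · log(1 + 2 · exp(−2t/γ)) and F < 0. In particular F_γ(x, x) ≠ 0, so Soft-MSM fails non-negativity and the identity of indiscernibles and is not a metric. -/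
/-- The two-argument soft minimum softmin_γ(a,b) = −γ·log(exp(−a/γ) + exp(−b/γ)). -/
noncomputable def softmin2 (γ a b : ℝ) : ℝ :=
  -γ * Real.log (Real.exp (-a / γ) + Real.exp (-b / γ))

/-- The three-argument soft minimum. -/
noncomputable def softmin3 (γ a b c : ℝ) : ℝ :=
  -γ * Real.log (Real.exp (-a / γ) + Real.exp (-b / γ) + Real.exp (-c / γ))

/-- The smooth between-gate g_ε(x,y,z) = (1/2)(1 − u/√(u² + ε)) with u = (x−y)(x−z). -/
noncomputable def gate (ε x y z : ℝ) : ℝ :=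
  (1 / 2) * (1 - ((x - y) * (x - z)) / Real.sqrt (((x - y) * (x - z)) ^ 2 + ε))

/-- The Soft-MSM transition cost
trans_{γ,ε}(x,y,z;c) = c + (1 − g_ε(x,y,z)) · softmin_γ((x−y)², (x−z)²). -/
noncomputable def softTrans (γ ε x y z c : ℝ) : ℝ :=
  c + (1 - gate ε x y z) * softmin2 γ ((x - y) ^ 2) ((x - z) ^ 2)

theorem softmin3_zero_self_self (γ a : ℝ) :
    softmin3 γ 0 a a = -γ * Real.log (1 + 2 * Real.exp (-a / γ)) := by
  rw [softmin3, neg_zero, zero_div, Real.exp_zero, add_assoc, ← two_mul]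

theorem softmin3_lt_left {γ : ℝ} (hγ : 0 < γ) (a b c : ℝ) : softmin3 γ a b c < a := by
  have hlog : -a / γ < Real.log (Real.exp (-a / γ) + Real.exp (-b / γ) + Real.exp (-c / γ)) := by
    rw [Real.lt_log_iff_exp_lt (by positivity)]
    linarith [Real.exp_pos (-b / γ), Real.exp_pos (-c / γ)]
  calc softmin3 γ a b c < -γ * (-a / γ) := by
        rw [softmin3]; exact mul_lt_mul_of_neg_left hlog (neg_neg_of_pos hγ)
    _ = a := by field_simp

theorem softMSM_self_neg_general (γ ε c : ℝ) (hγ : 0 < γ) :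
    softmin3 γ 0 (2 * softTrans γ ε 0 0 0 c) (2 * softTrans γ ε 0 0 0 c) =
        -γ * Real.log (1 + 2 * Real.exp (-(2 * softTrans γ ε 0 0 0 c) / γ)) ∧
      softmin3 γ 0 (2 * softTrans γ ε 0 0 0 c) (2 * softTrans γ ε 0 0 0 c) < 0 :=
  ⟨softmin3_zero_self_self γ _, softmin3_lt_left hγ 0 _ _⟩

/-- For the identical length-two series x = y = (0,0), the Soft-MSM value
F = softmin_γ(0, 2t, 2t) with t = trans_{γ,ε}(0,0,0;c) satisfies
F = −γ·log(1 + 2·exp(−2t/γ)) and F < 0; hence Soft-MSM fails non-negativity and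
the identity of indiscernibles, so it is not a metric. -/
theorem softMSM_self_neg (γ ε c : ℝ) (hγ : 0 < γ) (hε : 0 < ε) :
    softmin3 γ 0 (2 * softTrans γ ε 0 0 0 c) (2 * softTrans γ ε 0 0 0 c) =
        -γ * Real.log (1 + 2 * Real.exp (-(2 * softTrans γ ε 0 0 0 c) / γ)) ∧
      softmin3 γ 0 (2 * softTrans γ ε 0 0 0 c) (2 * softTrans γ ε 0 0 0 c) < 0 :=
  softMSM_self_neg_general γ ε c hγ
end

section
/- Let x, y, z ∈ ℝ and c ∈ ℝ, and set u := (x − y)(x − z). Assume u ≠ 0. If u < 0 (x strictly between y and z), then trans_{γ,ε}(x, y, z; c) → c as (γ, ε) → (0⁺, 0⁺); if u > 0, then trans_{γ,ε}(x, y, z; c) → c + min((x − y)², (x − z)²) as (γ, ε) → (0⁺, 0⁺). Here the limit is taken along the product of the filters of positive reals γ and ε tending to 0. -/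
/-!
The two factors decouple: the soft minimum depends only on `γ` and is squeezed between
`min a b - γ log 2` and `min a b`, while the gate depends only on `ε` and is continuous at
`ε = 0` as long as `u ≠ 0`, where it equals `(1 - sign u) / 2`. So `1 - gate` tends to `0`
when `u < 0` and to `1` when `u > 0`.
-/

open Filter Real Topology

section Softmin

variable {γ : ℝ} (a b : ℝ)

lemma softmin2_le_min (hγ : 0 < γ) : softmin2 γ a b ≤ min a b := by
  have hsum : exp (-min a b / γ) ≤ exp (-a / γ) + exp (-b / γ) := by
    rcases min_choice a b with h | h <;> rw [h] <;>
      linarith [exp_pos (-a / γ), exp_pos (-b / γ)]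
  have hlog := log_le_log (exp_pos _) hsum
  rw [log_exp, div_le_iff₀ hγ] at hlog
  unfold softmin2
  linarith

lemma min_sub_mul_log_two_le_softmin2 (hγ : 0 < γ) :
    min a b - γ * log 2 ≤ softmin2 γ a b := by
  have ha : exp (-a / γ) ≤ exp (-min a b / γ) := by gcongr; exact min_le_left a b
  have hb : exp (-b / γ) ≤ exp (-min a b / γ) := by gcongr; exact min_le_right a b
  have hlog := log_le_log (by positivity) (add_le_add ha hb)
  rw [← two_mul, log_mul two_ne_zero (exp_pos _).ne', log_exp, ← sub_le_iff_le_add',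
    le_div_iff₀ hγ] at hlog
  unfold softmin2
  linarith

lemma tendsto_softmin2 : Tendsto (fun γ => softmin2 γ a b) (𝓝[>] 0) (𝓝 (min a b)) := by
  have hlower : Tendsto (fun γ => min a b - γ * log 2) (𝓝[>] 0) (𝓝 (min a b)) := by
    have : Tendsto (fun γ => min a b - γ * log 2) (𝓝 0) (𝓝 (min a b - 0 * log 2)) :=
      tendsto_const_nhds.sub (tendsto_id.mul_const _)
    simpa using this.mono_left nhdsWithin_le_nhds
  refine tendsto_of_tendsto_of_tendsto_of_le_of_le' hlower tendsto_const_nhds ?_ ?_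
  · filter_upwards [self_mem_nhdsWithin] with γ hγ using min_sub_mul_log_two_le_softmin2 a b hγ
  · filter_upwards [self_mem_nhdsWithin] with γ hγ using softmin2_le_min a b hγ

end Softmin

section Gate

variable {x y z : ℝ}

lemma gate_zero (x y z : ℝ) :
    gate 0 x y z = 1 / 2 * (1 - (x - y) * (x - z) / |(x - y) * (x - z)|) := by
  simp [gate, sqrt_sq_eq_abs]

lemma continuousAt_gate (hu : (x - y) * (x - z) ≠ 0) :
    ContinuousAt (fun ε => gate ε x y z) 0 := by
  unfold gate
  refine continuousAt_const.mul (continuousAt_const.sub (continuousAt_const.div ?_ ?_))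
  · fun_prop
  · simpa [sqrt_sq_eq_abs] using hu

lemma tendsto_gate_of_neg (h : (x - y) * (x - z) < 0) :
    Tendsto (fun ε => gate ε x y z) (𝓝 0) (𝓝 1) := by
  have := (continuousAt_gate h.ne).tendsto
  rw [gate_zero, abs_of_neg h, div_neg_self h.ne] at this
  norm_num at this
  exact this

lemma tendsto_gate_of_pos (h : 0 < (x - y) * (x - z)) :
    Tendsto (fun ε => gate ε x y z) (𝓝 0) (𝓝 0) := by
  have := (continuousAt_gate h.ne').tendsto
  rwa [gate_zero, abs_of_pos h, div_self h.ne', sub_self, mul_zero] at this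

end Gate

lemma tendsto_softTrans {x y z g : ℝ} (c : ℝ)
    (hg : Tendsto (fun ε => gate ε x y z) (𝓝[>] 0) (𝓝 g)) :
    Tendsto (fun p : ℝ × ℝ => softTrans p.1 p.2 x y z c) (𝓝[>] 0 ×ˢ 𝓝[>] 0)
      (𝓝 (c + (1 - g) * min ((x - y) ^ 2) ((x - z) ^ 2))) :=
  tendsto_const_nhds.add
    ((tendsto_const_nhds.sub (hg.comp tendsto_snd)).mul ((tendsto_softmin2 _ _).comp tendsto_fst))

theorem softTrans_hard_limit_general (x y z c : ℝ) :
    ((x - y) * (x - z) < 0 →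
      Filter.Tendsto (fun p : ℝ × ℝ => softTrans p.1 p.2 x y z c)
        ((nhdsWithin 0 (Set.Ioi 0)) ×ˢ (nhdsWithin 0 (Set.Ioi 0))) (nhds c)) ∧
    (0 < (x - y) * (x - z) →
      Filter.Tendsto (fun p : ℝ × ℝ => softTrans p.1 p.2 x y z c)
        ((nhdsWithin 0 (Set.Ioi 0)) ×ˢ (nhdsWithin 0 (Set.Ioi 0)))
        (nhds (c + min ((x - y) ^ 2) ((x - z) ^ 2)))) := by
  refine ⟨fun h => ?_, fun h => ?_⟩
  · simpa using tendsto_softTrans c ((tendsto_gate_of_neg h).mono_left nhdsWithin_le_nhds)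
  · simpa using tendsto_softTrans c ((tendsto_gate_of_pos h).mono_left nhdsWithin_le_nhds)

/-- Hard-alignment limit of the Soft-MSM transition cost as (γ,ε) → (0⁺,0⁺):
it tends to c when x is strictly between y and z (u < 0), and to
c + min((x−y)², (x−z)²) when u > 0. -/
theorem softTrans_hard_limit (x y z c : ℝ) (hu : (x - y) * (x - z) ≠ 0) :
    ((x - y) * (x - z) < 0 →
      Filter.Tendsto (fun p : ℝ × ℝ => softTrans p.1 p.2 x y z c)
        ((nhdsWithin 0 (Set.Ioi 0)) ×ˢ (nhdsWithin 0 (Set.Ioi 0))) (nhds c)) ∧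
    (0 < (x - y) * (x - z) →
      Filter.Tendsto (fun p : ℝ × ℝ => softTrans p.1 p.2 x y z c)
        ((nhdsWithin 0 (Set.Ioi 0)) ×ˢ (nhdsWithin 0 (Set.Ioi 0)))
        (nhds (c + min ((x - y) ^ 2) ((x - z) ^ 2)))) :=
  softTrans_hard_limit_general x y z c
end

section
/- Let m ≥ 1, γ > 0, ε > 0, and c ∈ ℝ. The Soft-MSM objective F_γ : (Fin m → ℝ) × (Fin m → ℝ) → ℝ, defined as the final entry C_{m,m} of the Soft-MSM forward recursion, is continuously differentiable (indeed C^∞) with respect to all entries of both input series. -/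
/-- The Soft-MSM cost matrix `C`, as a forward recursion over 0-based indices:
`softMSMCost γ ε c x y i j` is the entry C_{i+1, j+1} (in the paper's 1-based
notation) for the series x, y : ℕ → ℝ (0-indexed). -/
noncomputable def softMSMCost (γ ε c : ℝ) (x y : ℕ → ℝ) : ℕ → ℕ → ℝ
  | 0, 0 => (x 0 - y 0) ^ 2
  | i + 1, 0 => softTrans γ ε (x (i + 1)) (x i) (y 0) c + softMSMCost γ ε c x y i 0
  | 0, j + 1 => softTrans γ ε (y (j + 1)) (y j) (x 0) c + softMSMCost γ ε c x y 0 j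
  | i + 1, j + 1 =>
      softmin3 γ
        ((x (i + 1) - y (j + 1)) ^ 2 + softMSMCost γ ε c x y i j)
        (softTrans γ ε (x (i + 1)) (x i) (y (j + 1)) c + softMSMCost γ ε c x y i (j + 1))
        (softTrans γ ε (y (j + 1)) (y j) (x (i + 1)) c + softMSMCost γ ε c x y (i + 1) j)

section Smoothness

variable {E : Type*} [NormedAddCommGroup E] [NormedSpace ℝ E] {n : WithTop ℕ∞} {f g h : E → ℝ}

theorem ContDiff.softmin2 (γ : ℝ) (hf : ContDiff ℝ n f) (hg : ContDiff ℝ n g) :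
    ContDiff ℝ n fun p => softmin2 γ (f p) (g p) :=
  contDiff_const.mul <|
    ((hf.neg.div_const γ).exp.add (hg.neg.div_const γ).exp).log fun _ => by positivity

theorem ContDiff.softmin3 (γ : ℝ) (hf : ContDiff ℝ n f) (hg : ContDiff ℝ n g)
    (hh : ContDiff ℝ n h) : ContDiff ℝ n fun p => softmin3 γ (f p) (g p) (h p) :=
  contDiff_const.mul <|
    (((hf.neg.div_const γ).exp.add (hg.neg.div_const γ).exp).add
      (hh.neg.div_const γ).exp).log fun _ => by positivity

theorem ContDiff.gate {ε : ℝ} (hε : 0 < ε) (hf : ContDiff ℝ n f) (hg : ContDiff ℝ n g)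
    (hh : ContDiff ℝ n h) : ContDiff ℝ n fun p => gate ε (f p) (g p) (h p) := by
  have hu : ContDiff ℝ n fun p => (f p - g p) * (f p - h p) := (hf.sub hg).mul (hf.sub hh)
  have hpos : ∀ p, 0 < ((f p - g p) * (f p - h p)) ^ 2 + ε := fun _ => by positivity
  have hden : ContDiff ℝ n fun p => √(((f p - g p) * (f p - h p)) ^ 2 + ε) :=
    ((hu.pow 2).add contDiff_const).sqrt fun p => (hpos p).ne'
  exact contDiff_const.mul <|
    contDiff_const.sub <| hu.div hden fun p => (Real.sqrt_pos.mpr (hpos p)).ne'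

theorem ContDiff.softTrans (γ : ℝ) {ε : ℝ} (hε : 0 < ε) (c : ℝ) (hf : ContDiff ℝ n f)
    (hg : ContDiff ℝ n g) (hh : ContDiff ℝ n h) :
    ContDiff ℝ n fun p => softTrans γ ε (f p) (g p) (h p) c :=
  contDiff_const.add <| (contDiff_const.sub (hf.gate hε hg hh)).mul <|
    ((hf.sub hg).pow 2).softmin2 γ ((hf.sub hh).pow 2)

theorem contDiff_softMSMCost (γ : ℝ) {ε : ℝ} (hε : 0 < ε) (c : ℝ) {x y : E → ℕ → ℝ}
    (hx : ∀ k, ContDiff ℝ n fun p => x p k) (hy : ∀ k, ContDiff ℝ n fun p => y p k) :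
    ∀ i j, ContDiff ℝ n fun p => softMSMCost γ ε c (x p) (y p) i j
  | 0, 0 => by
    simp only [softMSMCost]
    exact ((hx 0).sub (hy 0)).pow 2
  | i + 1, 0 => by
    simp only [softMSMCost]
    exact ((hx (i + 1)).softTrans γ hε c (hx i) (hy 0)).add
      (contDiff_softMSMCost γ hε c hx hy i 0)
  | 0, j + 1 => by
    simp only [softMSMCost]
    exact ((hy (j + 1)).softTrans γ hε c (hy j) (hx 0)).add
      (contDiff_softMSMCost γ hε c hx hy 0 j)
  | i + 1, j + 1 => by
    simp only [softMSMCost]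
    exact ((((hx (i + 1)).sub (hy (j + 1))).pow 2).add
        (contDiff_softMSMCost γ hε c hx hy i j)).softmin3 γ
      (((hx (i + 1)).softTrans γ hε c (hx i) (hy (j + 1))).add
        (contDiff_softMSMCost γ hε c hx hy i (j + 1)))
      (((hy (j + 1)).softTrans γ hε c (hy j) (hx (i + 1))).add
        (contDiff_softMSMCost γ hε c hx hy (i + 1) j))

end Smoothness

theorem softMSM_objective_contDiff_general (m : ℕ) (hm : 1 ≤ m) (γ ε c : ℝ)
    (hε : 0 < ε) :
    ContDiff ℝ (⊤ : ℕ∞)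
        (fun p : (Fin m → ℝ) × (Fin m → ℝ) =>
          softMSMCost γ ε c (fun i => p.1 ⟨i % m, Nat.mod_lt i hm⟩)
            (fun j => p.2 ⟨j % m, Nat.mod_lt j hm⟩) (m - 1) (m - 1)) ∧
      ContDiff ℝ 1
        (fun p : (Fin m → ℝ) × (Fin m → ℝ) =>
          softMSMCost γ ε c (fun i => p.1 ⟨i % m, Nat.mod_lt i hm⟩)
            (fun j => p.2 ⟨j % m, Nat.mod_lt j hm⟩) (m - 1) (m - 1)) := by
  have hsmooth : ∀ n : WithTop ℕ∞, ContDiff ℝ n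
      (fun p : (Fin m → ℝ) × (Fin m → ℝ) =>
        softMSMCost γ ε c (fun i => p.1 ⟨i % m, Nat.mod_lt i hm⟩)
          (fun j => p.2 ⟨j % m, Nat.mod_lt j hm⟩) (m - 1) (m - 1)) := fun n =>
    contDiff_softMSMCost γ hε c
      (fun k => (contDiff_apply ℝ ℝ _).comp contDiff_fst)
      (fun k => (contDiff_apply ℝ ℝ _).comp contDiff_snd) (m - 1) (m - 1)
  exact ⟨hsmooth _, hsmooth _⟩

/-- The Soft-MSM objective F_γ(x,y) = C_{m,m} is C^∞ (in particular C¹) jointly in all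
entries of both input series x, y ∈ ℝ^m. -/
theorem softMSM_objective_contDiff (m : ℕ) (hm : 1 ≤ m) (γ ε c : ℝ)
    (hγ : 0 < γ) (hε : 0 < ε) :
    ContDiff ℝ (⊤ : ℕ∞)
        (fun p : (Fin m → ℝ) × (Fin m → ℝ) =>
          softMSMCost γ ε c (fun i => p.1 ⟨i % m, Nat.mod_lt i hm⟩)
            (fun j => p.2 ⟨j % m, Nat.mod_lt j hm⟩) (m - 1) (m - 1)) ∧
      ContDiff ℝ 1
        (fun p : (Fin m → ℝ) × (Fin m → ℝ) =>
          softMSMCost γ ε c (fun i => p.1 ⟨i % m, Nat.mod_lt i hm⟩)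
            (fun j => p.2 ⟨j % m, Nat.mod_lt j hm⟩) (m - 1) (m - 1)) :=
  softMSM_objective_contDiff_general m hm γ ε c hε
end
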